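/- Let r ≥ 1. If cms_r(λK_{n_1,…,n_k}) = r·n_1, then n_1^{u−1} divides r_2. -/

import Mathlib

/-- A hypergraph: a finite vertex type, a finite edge (label) type and an incidence
relation; distinct (parallel) edges may be incident with the same vertices. -/
structure Hypergraph' where
  V : Type
  E : Type
  fintV : Fintype V
  fintE : Fintype E
  inc : E → V → Bool

namespace Hypergraph'

/-- The number ε of edges of `H`. -/
def edgeCard (H : Hypergraph') : ℕ :=
  letI := H.fintE
  Fintype.card H.E

/-- The degree of a vertex: the number of edges incident with it. -/
def degree (H : Hypergraph') (v : H.V) : ℕ :=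
  letI := H.fintE
  (Finset.univ.filter (fun e => H.inc e v = true)).card

/-- The maximum degree Δ(H). -/
def maxDegree (H : Hypergraph') : ℕ :=
  letI := H.fintV
  Finset.univ.sup H.degree

/-- An ordering (labelling) of `H`, encoded by its ε-periodic enumeration:
`f i` is the edge whose label is `i % ε`; on `[ε]`, `f` is a bijection onto the
edge set. -/
structure IsOrdering (H : Hypergraph') (f : ℕ → H.E) : Prop where
  periodic : ∀ i, f (i + H.edgeCard) = f i
  inj : ∀ i j, i < H.edgeCard → j < H.edgeCard → f i = f j → i = j
  surj : ∀ e : H.E, ∃ i, i < H.edgeCard ∧ f i = e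

/-- The degree of `v` in the hypergraph `H(S)` formed (with multiplicity) by the
sequence `S` of `s` (cyclically) consecutive edges with labels `j, …, j+s-1`
taken modulo ε. -/
def windowDeg (H : Hypergraph') (f : ℕ → H.E) (j s : ℕ) (v : H.V) : ℕ :=
  ((Finset.range s).filter (fun i => H.inc (f (j + i)) v = true)).card

/-- Every sequence of `s` consecutive edges of the ordering `f` forms a hypergraph of
maximum degree at most `r`.  A window of `s` consecutive edges starts at a label `j`
with `j + s ≤ (a+1)·ε`, where `a·ε ≤ s < (a+1)·ε` (i.e. `a = s / ε`). -/
def msOK (H : Hypergraph') (f : ℕ → H.E) (r s : ℕ) : Prop :=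
  ∀ j v, j + s ≤ (s / H.edgeCard + 1) * H.edgeCard → H.windowDeg f j s v ≤ r

/-- Every sequence of `s` cyclically consecutive edges of the ordering `f` forms a
hypergraph of maximum degree at most `r`. -/
def cmsOK (H : Hypergraph') (f : ℕ → H.E) (r s : ℕ) : Prop :=
  ∀ j v, H.windowDeg f j s v ≤ r

/-- ms_r(ℓ): the largest `s` such that every `s` consecutive edges of `ℓ` form a
hypergraph of maximum degree at most `r`. -/
noncomputable def msrOf (H : Hypergraph') (f : ℕ → H.E) (r : ℕ) : ℕ :=
  sSup {s | H.msOK f r s}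

/-- cms_r(ℓ). -/
noncomputable def cmsrOf (H : Hypergraph') (f : ℕ → H.E) (r : ℕ) : ℕ :=
  sSup {s | H.cmsOK f r s}

/-- ms_r(H): the maximum of ms_r(ℓ) over all orderings ℓ of H. -/
noncomputable def msr (H : Hypergraph') (r : ℕ) : ℕ :=
  sSup {s | ∃ f, H.IsOrdering f ∧ H.msOK f r s}

/-- cms_r(H): the maximum of cms_r(ℓ) over all orderings ℓ of H. -/
noncomputable def cmsr (H : Hypergraph') (r : ℕ) : ℕ :=
  sSup {s | ∃ f, H.IsOrdering f ∧ H.cmsOK f r s}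

end Hypergraph'

/-- The complete multi-k-partite k-graph λ·K_{n 0, …, n (k-1)} with edge
multiplicity `lam`: the vertex set is the disjoint union of the parts
`N_i = Fin (n i)`, and for each choice of one vertex from each part there are
`lam` parallel edges incident with exactly those `k` vertices. -/
def lamK (k lam : ℕ) (n : Fin k → ℕ) : Hypergraph' where
  V := Σ i : Fin k, Fin (n i)
  E := Fin lam × (∀ i : Fin k, Fin (n i))
  fintV := inferInstance
  fintE := inferInstance
  inc := fun e v => decide (e.2 v.1 = v.2)

/-!
Take an ordering attaining `cms_r = r·n₁` (the supremum is attained: a window of `s` edges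
meets the `n₁` vertices of the first part `s` times in total, so `s ≤ r·n₁`). For a part `N_t`
with `t < u`, a window of `r·n₁ = r·|N_t|` edges then meets every vertex of `N_t` exactly `r`
times, and sliding it by one edge shows that the `N_t`-coordinate of the edge sequence is
`r·n₁`-periodic. Being `ε`-periodic as well, the first `u` coordinates are periodic with period
`g = gcd(r·n₁, ε) = n₁·gcd(r₂, λN)`. Counting the `ε / n₁^u` edges with prescribed first `u`
coordinates block by block (`ε / g` blocks of length `g`, each containing the same number `c`
of them) gives `g = n₁^u·c`, so `n₁^u ∣ n₁·gcd(r₂, λN)`.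
-/

open Function Finset Hypergraph'

theorem Function.Periodic.nat_gcd {α : Type*} {f : ℕ → α} {a b : ℕ} (ha : Periodic f a)
    (hb : Periodic f b) : Periodic f (a.gcd b) := by
  induction a, b using Nat.gcd.induction with
  | H0 b => simpa using hb
  | H1 a b _ ih =>
    rw [Nat.gcd_rec]
    refine ih (fun x => ?_) ha
    rw [← ha.nat_mul (b / a) (x + b % a), Nat.cast_id, add_assoc, Nat.mod_add_div', hb]

theorem Function.Periodic.count_nat_mul {p : ℕ → Prop} [DecidablePred p] {g : ℕ}
    (hp : Periodic p g) (m : ℕ) : Nat.count p (m * g) = m * Nat.count p g := by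
  induction m with
  | zero => simp
  | succ m ih =>
    have hshift (i : ℕ) : p (m * g + i) = p i := by
      rw [add_comm, ← hp.nat_mul m i, Nat.cast_id]
    rw [add_mul, one_mul, Nat.count_add, ih]
    simp only [hshift, add_mul, one_mul]

namespace Hypergraph'

variable (H : Hypergraph')

theorem exists_isOrdering (h : 0 < H.edgeCard) : ∃ f, H.IsOrdering f := by
  let _ := H.fintE
  let e : Fin H.edgeCard ≃ H.E := (Fintype.equivFin H.E).symm
  refine ⟨fun i => e ⟨i % H.edgeCard, Nat.mod_lt _ h⟩, fun i => ?_, fun i j hi hj hij => ?_,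
    fun x => ⟨e.symm x, (e.symm x).isLt, ?_⟩⟩
  · simp
  · simpa [Nat.mod_eq_of_lt hi, Nat.mod_eq_of_lt hj] using congrArg Fin.val (e.injective hij)
  · simp [Nat.mod_eq_of_lt (e.symm x).isLt]

variable {H}

theorem IsOrdering.count_eq_natCard {f : ℕ → H.E} (hf : H.IsOrdering f) (P : H.E → Prop)
    [DecidablePred P] : Nat.count (fun i => P (f i)) H.edgeCard = Nat.card {e // P e} := by
  let _ := H.fintE
  rw [Nat.count_eq_card_filter_range, Nat.card_eq_fintype_card, Fintype.card_subtype]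
  refine card_bij (fun i _ => f i) (fun i hi => ?_) (fun i hi j hj hij => ?_) (fun e he => ?_)
  · simp_all
  · simp only [mem_filter, mem_range] at hi hj
    exact hf.inj i j hi.1 hj.1 hij
  · obtain ⟨i, hi, rfl⟩ := hf.surj e
    exact ⟨i, by simp_all⟩

theorem windowDeg_succ (f : ℕ → H.E) (j s : ℕ) (v : H.V) :
    H.windowDeg f j (s + 1) v = H.windowDeg f j s v + if H.inc (f (j + s)) v then 1 else 0 := by
  simp only [windowDeg, card_filter, sum_range_succ]

theorem windowDeg_succ' (f : ℕ → H.E) (j s : ℕ) (v : H.V) :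
    H.windowDeg f j (s + 1) v = (if H.inc (f j) v then 1 else 0) + H.windowDeg f (j + 1) s v := by
  simp only [windowDeg, card_filter, sum_range_succ', add_zero, add_comm, add_left_comm]

theorem inc_add_eq_of_windowDeg_eq {f : ℕ → H.E} {j s : ℕ} {v : H.V}
    (h : H.windowDeg f j s v = H.windowDeg f (j + 1) s v) : H.inc (f (j + s)) v = H.inc (f j) v := by
  have := (windowDeg_succ f j s v).symm.trans (windowDeg_succ' f j s v)
  rw [h, add_comm] at this
  revert this
  cases H.inc (f (j + s)) v <;> cases H.inc (f j) v <;> simp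

theorem edgeCard_pos (e : H.E) : 0 < H.edgeCard :=
  (@Fintype.card_pos_iff _ H.fintE).mpr ⟨e⟩

theorem exists_cmsOK_cmsr (h : 0 < H.edgeCard) {r b : ℕ}
    (hb : ∀ f s, H.IsOrdering f → H.cmsOK f r s → s ≤ b) :
    ∃ f, H.IsOrdering f ∧ H.cmsOK f r (H.cmsr r) := by
  obtain ⟨f, hf⟩ := H.exists_isOrdering h
  have hne : {s | ∃ f, H.IsOrdering f ∧ H.cmsOK f r s}.Nonempty :=
    ⟨0, f, hf, fun j v => by simp [windowDeg]⟩
  exact Nat.sSup_mem hne ⟨b, fun s ⟨f, hf, hs⟩ => hb f s hf hs⟩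

end Hypergraph'

section CompleteMultipartite

variable {k lam : ℕ} {n : Fin k → ℕ}

theorem edgeCard_lamK : (lamK k lam n).edgeCard = lam * ∏ i, n i := by
  rw [edgeCard, Fintype.card_eq_nat_card]
  simp [lamK]

theorem sum_windowDeg_lamK (f : ℕ → (lamK k lam n).E) (j s : ℕ) (t : Fin k) :
    ∑ a : Fin (n t), (lamK k lam n).windowDeg f j s ⟨t, a⟩ = s := by
  have := card_eq_sum_card_fiberwise (s := range s) (t := univ)
    (f := fun i => (f (j + i)).2 t) fun _ _ => mem_univ _
  simpa [windowDeg, lamK] using this.symm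

theorem le_mul_of_cmsOK_lamK {f : ℕ → (lamK k lam n).E} {r s : ℕ}
    (hf : (lamK k lam n).cmsOK f r s) (t : Fin k) : s ≤ r * n t :=
  calc s = ∑ a : Fin (n t), (lamK k lam n).windowDeg f 0 s ⟨t, a⟩ :=
        (sum_windowDeg_lamK f 0 s t).symm
    _ ≤ ∑ _a : Fin (n t), r := sum_le_sum fun a _ => hf 0 _
    _ = r * n t := by simp [mul_comm]

theorem windowDeg_eq_of_cmsOK_lamK {f : ℕ → (lamK k lam n).E} {r : ℕ} {t : Fin k}
    (hf : (lamK k lam n).cmsOK f r (r * n t)) (j : ℕ) (a : Fin (n t)) :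
    (lamK k lam n).windowDeg f j (r * n t) ⟨t, a⟩ = r := by
  have hsum : ∑ a : Fin (n t), (lamK k lam n).windowDeg f j (r * n t) ⟨t, a⟩
      = ∑ _a : Fin (n t), r := by
    simp [sum_windowDeg_lamK, mul_comm]
  exact (sum_eq_sum_iff_of_le fun a _ => hf j _).mp hsum a (mem_univ a)

theorem periodic_of_cmsOK_lamK {f : ℕ → (lamK k lam n).E} {r : ℕ} {t : Fin k}
    (hf : (lamK k lam n).cmsOK f r (r * n t)) :
    Periodic (fun j => (f j).2 t) (r * n t) := fun j => by
  have := inc_add_eq_of_windowDeg_eq (H := lamK k lam n) (v := ⟨t, (f j).2 t⟩)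
    ((windowDeg_eq_of_cmsOK_lamK hf j _).trans (windowDeg_eq_of_cmsOK_lamK hf (j + 1) _).symm)
  simpa [lamK] using this

theorem natCard_eqOn_lamK (S : Finset (Fin k)) (x : ∀ i, Fin (n i)) :
    Nat.card {e : (lamK k lam n).E // ∀ t ∈ S, e.2 t = x t} = lam * ∏ i ∈ Sᶜ, n i := by
  classical
  have : univ.filter (fun e : Fin lam × (∀ i, Fin (n i)) => ∀ t ∈ S, e.2 t = x t)
      = univ ×ˢ Fintype.piFinset (fun i => if i ∈ S then {x i} else univ) := by
    ext e
    simp only [mem_filter, mem_univ, true_and, mem_product, Fintype.mem_piFinset]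
    refine forall_congr' fun t => ?_
    split_ifs <;> simp_all
  change Nat.card {e : Fin lam × (∀ i, Fin (n i)) // _} = _
  rw [Nat.card_eq_fintype_card, Fintype.card_subtype, this, card_product, card_univ,
    Fintype.card_fin, Fintype.card_piFinset]
  simp [apply_ite card, prod_ite, filter_not, compl_eq_univ_sdiff]

theorem prod_dvd_of_periodic_lamK {f : ℕ → (lamK k lam n).E} (hf : (lamK k lam n).IsOrdering f)
    (S : Finset (Fin k)) {g : ℕ} (hg : g ∣ (lamK k lam n).edgeCard)
    (hper : ∀ t ∈ S, Periodic (fun j => (f j).2 t) g) : ∏ i ∈ S, n i ∣ g := by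
  classical
  let P : (lamK k lam n).E → Prop := fun e => ∀ t ∈ S, e.2 t = (f 0).2 t
  have hP : Periodic (fun j => P (f j)) g := fun j =>
    propext <| forall₂_congr fun t ht => iff_of_eq (congrArg (· = _) (hper t ht j))
  obtain ⟨m, hm⟩ := hg
  have hm0 : 0 < m := by
    have := edgeCard_pos (f 0)
    rw [hm] at this
    exact Nat.pos_of_mul_pos_left this
  have hcount := hf.count_eq_natCard P
  rw [natCard_eqOn_lamK, hm, mul_comm, hP.count_nat_mul] at hcount
  have hε := (edgeCard_lamK (k := k) (lam := lam) (n := n)).symm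
  rw [hm, ← prod_mul_prod_compl S] at hε
  refine ⟨Nat.count (fun j => P (f j)) g, Nat.eq_of_mul_eq_mul_right hm0 ?_⟩
  rw [← hε, mul_assoc, mul_comm _ m, hcount]
  ring

end CompleteMultipartite

/-- Lemma (necessary condition, cyclic): if `cms_r(λK_{n_1,…,n_k}) = r·n_1`
then `n_1^(u-1) ∣ r_2`. -/
theorem cms_eq_necessary
    (k lam u : ℕ) (n : Fin k → ℕ)
    (hk : 2 ≤ k) (hlam : 1 ≤ lam)
    (hu1 : 1 ≤ u) (huk : u ≤ k)
    (hpos : ∀ i, 1 ≤ n i)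
    (heq : ∀ i : Fin k, (i : ℕ) < u → n i = n ⟨0, by omega⟩)
    (N : ℕ)
    (hN : N = ∏ i ∈ Finset.univ.filter (fun i : Fin k => (i : ℕ) ≠ 0), n i)
    (r r1 r2 : ℕ)
    (hrdec : r = r1 * (lam * N) + r2)
    (hcms : (lamK k lam n).cmsr r = r * n ⟨0, by omega⟩) :
    (n ⟨0, by omega⟩) ^ (u - 1) ∣ r2 := by
  set i₀ : Fin k := ⟨0, by omega⟩
  have hε : (lamK k lam n).edgeCard = n i₀ * (lam * N) := by
    rw [edgeCard_lamK, hN, ← mul_prod_erase univ n (mem_univ i₀), mul_left_comm]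
    congr 3
    ext i
    simp [i₀, Fin.ext_iff]
  have hε₀ : 0 < (lamK k lam n).edgeCard := by
    rw [edgeCard_lamK]
    exact Nat.mul_pos hlam (prod_pos fun i _ => hpos i)
  obtain ⟨f, hf, hok⟩ := exists_cmsOK_cmsr hε₀ fun f s _ hs => le_mul_of_cmsOK_lamK hs i₀
  rw [hcms] at hok
  have hper : ∀ t ∈ univ.filter (fun t : Fin k => (t : ℕ) < u),
      Periodic (fun j => (f j).2 t) ((r * n i₀).gcd (lamK k lam n).edgeCard) := by
    intro t ht
    rw [← heq t (mem_filter.mp ht).2] at hok ⊢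
    exact (periodic_of_cmsOK_lamK hok).nat_gcd fun j => congrArg (·.2 t) (hf.periodic j)
  have hprod : ∏ t ∈ univ.filter (fun t : Fin k => (t : ℕ) < u), n t = n i₀ ^ u := by
    rw [prod_congr rfl fun t ht => heq t (mem_filter.mp ht).2, prod_const,
      Fin.card_filter_val_lt, min_eq_right huk]
  have hgcd : (r * n i₀).gcd (lamK k lam n).edgeCard = n i₀ * r2.gcd (lam * N) := by
    rw [hε, mul_comm r, Nat.gcd_mul_left, hrdec, Nat.gcd_mul_right_add_left]
  have hdvd := prod_dvd_of_periodic_lamK hf _ (Nat.gcd_dvd_right _ _) hper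
  rw [hprod, hgcd, ← Nat.sub_add_cancel hu1, pow_succ'] at hdvd
  exact (Nat.dvd_of_mul_dvd_mul_left (hpos i₀) hdvd).trans (Nat.gcd_dvd_left _ _)
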